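/- Let A = K[a_1,…,a_n] be a solvable polynomial algebra. Then every left A-module M has projective dimension p.dim_A M ≤ n; consequently the global homological dimension of A satisfies gl.dim A ≤ n. -/

import Mathlib

noncomputable section

open scoped BigOperators

/-- A monomial ordering on the exponent monoid `ℕ^n`: a well-ordering, total and transitive,
admitting `0` (i.e. the monomial `1`) as least element and compatible with addition of
exponents (i.e. with multiplication of monomials from both sides). -/
structure MonOrder (n : ℕ) where
  lt : (Fin n → ℕ) → (Fin n → ℕ) → Prop
  wf : WellFounded lt
  lt_trans : ∀ {α β γ}, lt α β → lt β γ → lt α γ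
  lt_total : ∀ α β, lt α β ∨ α = β ∨ lt β α
  zero_min : ∀ α : Fin n → ℕ, α ≠ 0 → lt 0 α
  add_right : ∀ {α β : Fin n → ℕ} (γ : Fin n → ℕ), lt α β → lt (α + γ) (β + γ)

/-- The ordered monomial `a₁^{α 1} ⋯ a_n^{α n}` in the generators `a`. -/
def SolvMono {A : Type*} [Ring A] {n : ℕ} (a : Fin n → A) (α : Fin n → ℕ) : A :=
  ((List.finRange n).map fun i => a i ^ α i).prod

/-- A solvable polynomial algebra structure on a `K`-algebra `A` with generators
`gen 1, …, gen n`:  (S1) the ordered monomials in the generators form a PBW `K`-basis;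
(S2) there is a monomial ordering `ord` such that
`a^α a^β = λ_{α,β} a^{α+β} + (terms ≺ a^{α+β})` with `λ_{α,β} ≠ 0`. -/
structure SolvAlg (K : Type*) [Field K] (A : Type*) [Ring A] [Algebra K A] (n : ℕ) where
  gen : Fin n → A
  basis : Module.Basis (Fin n → ℕ) K A
  basis_eq : ∀ α, basis α = SolvMono gen α
  ord : MonOrder n
  s2_lc : ∀ α β, basis.repr (basis α * basis β) (α + β) ≠ 0
  s2_lower : ∀ α β δ, δ ∈ (basis.repr (basis α * basis β)).support → δ ≠ α + β →
    ord.lt δ (α + β)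

namespace SolvAlg

variable {K : Type*} [Field K] {A : Type*} [Ring A] [Algebra K A] {n : ℕ}

/-- `α` is the exponent of the leading monomial of `f` (so in particular `f ≠ 0`). -/
def IsLM (S : SolvAlg K A n) (f : A) (α : Fin n → ℕ) : Prop :=
  α ∈ (S.basis.repr f).support ∧
    ∀ β ∈ (S.basis.repr f).support, β ≠ α → S.ord.lt β α

/-- Left division of monomials: `a^α |_L a^β` iff `a^β = LM(a^γ a^α)` for some monomial `a^γ`. -/
def DvdL (S : SolvAlg K A n) (α β : Fin n → ℕ) : Prop :=
  ∃ γ, S.IsLM (S.basis γ * S.basis α) β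

/-- `α ⪯ β` for the monomial ordering. -/
def LEord (S : SolvAlg K A n) (α β : Fin n → ℕ) : Prop :=
  α = β ∨ S.ord.lt α β

/-- `G` is a left Gröbner basis of the left ideal `N`. -/
def IsGBIdeal (S : SolvAlg K A n) (N : Ideal A) (G : Set A) : Prop :=
  G ⊆ (N : Set A) ∧ (0 : A) ∉ G ∧
    ∀ f ∈ N, f ≠ 0 → ∃ g ∈ G, ∃ α β, S.IsLM g α ∧ S.IsLM f β ∧ S.DvdL α β

/-- The set of (exponents of) normal monomials mod `G`. -/
def NormalSet (S : SolvAlg K A n) (G : Set A) : Set (Fin n → ℕ) :=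
  {γ | ∀ g ∈ G, ∀ α, S.IsLM g α → ¬ S.DvdL α γ}

/-- A minimal left Gröbner basis: no proper subset is again a left Gröbner basis. -/
def IsMinimalGBIdeal (S : SolvAlg K A n) (N : Ideal A) (G : Set A) : Prop :=
  IsGBIdeal S N G ∧ ∀ G' : Set A, G' ⊂ G → ¬ IsGBIdeal S N G'

/-- A reduced left Gröbner basis: minimal, monic, and all tails normal mod `G`. -/
def IsReducedGBIdeal (S : SolvAlg K A n) (N : Ideal A) (G : Set A) : Prop :=
  IsMinimalGBIdeal S N G ∧
  (∀ g ∈ G, ∀ α, S.IsLM g α → S.basis.repr g α = 1) ∧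
  (∀ g ∈ G, ∀ α, S.IsLM g α →
    g - S.basis α ∈ Submodule.span K ((fun γ => S.basis γ) '' NormalSet S G))

/-- The set of monomials `a^α e_i` occurring in an element `ξ` of the free module `A^s`. -/
def MSupp (S : SolvAlg K A n) {s : ℕ} (ξ : Fin s → A) : Set ((Fin n → ℕ) × Fin s) :=
  {p | S.basis.repr (ξ p.2) p.1 ≠ 0}

/-- `p` is the leading monomial of `ξ` with respect to the (left monomial) ordering `r`
on the monomials of the free module `A^s`. -/
def IsLMMr (S : SolvAlg K A n) {s : ℕ}
    (r : ((Fin n → ℕ) × Fin s) → ((Fin n → ℕ) × Fin s) → Prop)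
    (ξ : Fin s → A) (p : (Fin n → ℕ) × Fin s) : Prop :=
  p ∈ S.MSupp ξ ∧ ∀ q ∈ S.MSupp ξ, q ≠ p → r q p

/-- Left division of module monomials:  `a^α e_i |_L a^β e_j` iff `i = j` and
`a^β e_i = LM(a^γ · a^α e_i)` for some `a^γ`. -/
def MDvdL (S : SolvAlg K A n) {s : ℕ} (p q : (Fin n → ℕ) × Fin s) : Prop :=
  p.2 = q.2 ∧ ∃ γ, S.IsLM (S.basis γ * S.basis p.1) q.1

/-- `G` is a left Gröbner basis of the set (submodule) `Nset` of the free module `A^s`,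
with respect to the left monomial ordering `r`. -/
def IsGBrel (S : SolvAlg K A n) {s : ℕ}
    (r : ((Fin n → ℕ) × Fin s) → ((Fin n → ℕ) × Fin s) → Prop)
    (Nset : Set (Fin s → A)) (G : Set (Fin s → A)) : Prop :=
  G ⊆ Nset ∧ (0 : Fin s → A) ∉ G ∧
    ∀ ξ ∈ Nset, ξ ≠ 0 → ∃ γ ∈ G, ∃ p q, S.IsLMMr r γ p ∧ S.IsLMMr r ξ q ∧ S.MDvdL p q

/-- The left S-polynomial `S_ℓ(ξ, ζ)` of `ξ, ζ` whose leading monomials are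
`a^α e_i` and `a^β e_j` respectively. -/
def spolyData (S : SolvAlg K A n) {s : ℕ} (ξ ζ : Fin s → A)
    (α β : Fin n → ℕ) (i j : Fin s) : Fin s → A :=
  if i = j then
    (S.basis.repr ((S.basis ((fun k => max (α k) (β k)) - α) • ξ) i)
        (fun k => max (α k) (β k)))⁻¹ •
      (S.basis ((fun k => max (α k) (β k)) - α) • ξ) -
    (S.basis.repr ((S.basis ((fun k => max (α k) (β k)) - β) • ζ) i)
        (fun k => max (α k) (β k)))⁻¹ •
      (S.basis ((fun k => max (α k) (β k)) - β) • ζ)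
  else 0

end SolvAlg

/-- A left monomial ordering on the monomials `{a^α e_i}` of the free module `A^s`:
a total ordering compatible with the (left) multiplication by monomials of `A` and
restricting on each component to the monomial ordering of `A`. -/
structure ModOrder {K : Type*} [Field K] {A : Type*} [Ring A] [Algebra K A] {n : ℕ}
    (S : SolvAlg K A n) (s : ℕ) where
  lt : ((Fin n → ℕ) × Fin s) → ((Fin n → ℕ) × Fin s) → Prop
  lt_irrefl : ∀ p, ¬ lt p p
  lt_trans : ∀ {p q r}, lt p q → lt q r → lt p r
  lt_total : ∀ p q, lt p q ∨ p = q ∨ lt q p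
  compat : ∀ {α β : Fin n → ℕ} {i j : Fin s} (γ δ ε : Fin n → ℕ),
    lt (α, i) (β, j) → SolvAlg.IsLM S (S.basis γ * S.basis α) δ →
    SolvAlg.IsLM S (S.basis γ * S.basis β) ε → lt (δ, i) (ε, j)
  base : ∀ (α β : Fin n → ℕ) (i : Fin s), S.ord.lt α β → lt (α, i) (β, i)

/-!
Schreyer's proof of Hilbert's syzygy theorem carries over to solvable polynomial algebras, since
leading monomials multiply like commutative ones: `LM(a^γ f) = a^(γ + α)` when `LM(f) = a^α`.
If the `g_i` form a Gröbner basis of a submodule of a free module, the S-polynomials of pairs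
`g_j, g_i` with equal leading position, reduced to zero by division, give syzygies whose leading
terms divide the leading term of every syzygy for the Schreyer order. Sorting the `g_i` by the
exponent of `a_{k+1}` in their leading terms makes these syzygies free of `a_{k+1}` whenever the
`g_i` are free of `a_1, …, a_k`. After `n - 1` such steps only `a_n` is left, and then one
generator of minimal degree per position is a basis. So the `n`-th syzygy module of any module is
free.
-/

universe w u v

theorem Finset.exists_rel_max {α : Type*} (r : α → α → Prop) [IsStrictTotalOrder α r]
    {s : Finset α} (hs : s.Nonempty) : ∃ p ∈ s, ∀ q ∈ s, q ≠ p → r q p := by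
  classical
  let := linearOrderOfSTO r
  exact ⟨s.max' hs, s.max'_mem hs, fun q hq hne => lt_of_le_of_ne (s.le_max' q hq) hne⟩

namespace MonOrder

variable {n : ℕ} (o : MonOrder n)

instance isWellOrder : IsWellOrder (Fin n → ℕ) o.lt where
  wf := o.wf
  trichotomous a b hab hba := ((o.lt_total a b).resolve_left hab).resolve_right hba

theorem add_left (γ : Fin n → ℕ) {α β : Fin n → ℕ} (h : o.lt α β) : o.lt (γ + α) (γ + β) := by
  simpa only [add_comm γ] using o.add_right γ h

end MonOrder

/-- A monomial order on the terms `a^α e` of the free module `E →₀ A`. Unlike `ModOrder` it is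
a well-order, which the division algorithm needs. -/
structure TermOrder {n : ℕ} (o : MonOrder n) (E : Type*) where
  lt : (Fin n → ℕ) × E → (Fin n → ℕ) × E → Prop
  isWellOrder : IsWellOrder _ lt
  add_left : ∀ (γ : Fin n → ℕ) {p q : (Fin n → ℕ) × E},
    lt p q → lt (γ + p.1, p.2) (γ + q.1, q.2)
  lt_of_lt : ∀ {α β : Fin n → ℕ} (e : E), o.lt α β → lt (α, e) (β, e)

attribute [instance] TermOrder.isWellOrder

namespace TermOrder

variable {n : ℕ} {o : MonOrder n} {E ι : Type*}

def lex (o : MonOrder n) (E : Type*) : TermOrder o E where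
  lt := Prod.Lex o.lt WellOrderingRel
  isWellOrder := inferInstance
  add_left γ := by
    rintro ⟨α, e⟩ ⟨β, f⟩ (⟨_, _, h⟩ | ⟨_, h⟩)
    · exact Prod.Lex.left _ _ (o.add_left γ h)
    · exact Prod.Lex.right _ h
  lt_of_lt _ h := Prod.Lex.left _ _ h

def le (T : TermOrder o E) (p q : (Fin n → ℕ) × E) : Prop := p = q ∨ T.lt p q

theorem le.trans_lt {T : TermOrder o E} {p q r : (Fin n → ℕ) × E} (h₁ : T.le p q)
    (h₂ : T.lt q r) : T.lt p r := by
  rcases h₁ with rfl | h₁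
  · exact h₂
  · exact _root_.trans h₁ h₂

def weight (lm : ι → (Fin n → ℕ) × E) (q : (Fin n → ℕ) × ι) : (Fin n → ℕ) × E :=
  (q.1 + (lm q.2).1, (lm q.2).2)

theorem weight_add_left (lm : ι → (Fin n → ℕ) × E) (γ : Fin n → ℕ) (q : (Fin n → ℕ) × ι) :
    weight lm (γ + q.1, q.2) = (γ + (weight lm q).1, (weight lm q).2) := by
  simp only [weight, add_assoc]

theorem weight_injective (lm : ι → (Fin n → ℕ) × E) :
    Function.Injective fun q : (Fin n → ℕ) × ι => (weight lm q, q.2) := by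
  rintro ⟨α, i⟩ ⟨β, j⟩ h
  simp only [weight, Prod.mk.injEq] at h
  obtain ⟨⟨h, -⟩, rfl⟩ := h
  simpa using h

/-- The Schreyer order: `a^γ ε_i` is compared through its weight `a^γ · lm i`, which is the
leading term of `a^γ g_i` when `lm i` is that of `g_i`; ties are broken by `r`. -/
def schreyer (T : TermOrder o E) (lm : ι → (Fin n → ℕ) × E) (r : ι → ι → Prop)
    [IsWellOrder ι r] : TermOrder o ι where
  lt := InvImage (Prod.Lex T.lt r) fun q => (weight lm q, q.2)
  isWellOrder := (RelEmbedding.preimage ⟨_, weight_injective lm⟩ (Prod.Lex T.lt r)).isWellOrder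
  add_left γ p q h := by
    change Prod.Lex T.lt r (weight lm (γ + p.1, p.2), p.2) (weight lm (γ + q.1, q.2), q.2)
    rw [weight_add_left, weight_add_left, Prod.lex_def]
    rcases Prod.lex_def.1 h with h | ⟨h, h'⟩
    · exact Or.inl (T.add_left γ h)
    · exact Or.inr ⟨by simp only at h; rw [h], h'⟩
  lt_of_lt i h := Prod.Lex.left _ _ (T.lt_of_lt _ (o.add_right _ h))

theorem schreyer_lt_iff (T : TermOrder o E) (lm : ι → (Fin n → ℕ) × E) (r : ι → ι → Prop)
    [IsWellOrder ι r] {q q' : (Fin n → ℕ) × ι} :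
    (T.schreyer lm r).lt q q' ↔
      T.lt (weight lm q) (weight lm q') ∨ weight lm q = weight lm q' ∧ r q.2 q'.2 :=
  Prod.lex_def

end TermOrder

def VanishesBelow {n : ℕ} (k : ℕ) (α : Fin n → ℕ) : Prop := ∀ j : Fin n, (j : ℕ) < k → α j = 0

theorem VanishesBelow.eq_single {n k : ℕ} (hk : k < n) {α : Fin n → ℕ}
    (h : VanishesBelow k α) (hkn : n ≤ k + 1) : α = Pi.single ⟨k, hk⟩ (α ⟨k, hk⟩) := by
  funext j
  by_cases hj : j = ⟨k, hk⟩
  · subst hj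
    simp
  · rw [Pi.single_eq_of_ne hj]
    exact h j (by have := j.isLt; have : (j : ℕ) ≠ k := fun h => hj (Fin.ext h); omega)

theorem VanishesBelow.sup_tsub {n k : ℕ} (hk : k < n) {α β : Fin n → ℕ}
    (hβ : VanishesBelow k β) (hα : VanishesBelow k α) (hle : β ⟨k, hk⟩ ≤ α ⟨k, hk⟩) :
    VanishesBelow (k + 1) (β ⊔ α - α) := by
  intro x hx
  simp only [Pi.sub_apply, Pi.sup_apply]
  rcases Nat.lt_succ_iff_lt_or_eq.1 hx with hx | hx
  · rw [hα x hx, hβ x hx]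
    rfl
  · obtain rfl : x = ⟨k, hk⟩ := Fin.ext hx
    omega

section Resolution

open CategoryTheory

def HasProjectiveResolution (A : Type u) [Ring A] (N : Type v) [AddCommGroup N] [Module A N]
    (q : ℕ) : Prop :=
  ∃ (P : ℕ → ModuleCat.{w} A) (d : ∀ i : ℕ, P (i + 1) ⟶ P i) (ε : P 0 →ₗ[A] N),
    (∀ i, Projective (P i)) ∧
    (∀ i, q < i → Subsingleton (P i)) ∧
    Function.Surjective ε ∧
    LinearMap.ker ε = LinearMap.range (d 0).hom ∧
    ∀ i : ℕ, LinearMap.ker (d i).hom = LinearMap.range (d (i + 1)).hom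

variable {A : Type u} [Ring A]

theorem ModuleCat.projective_of_module_free (X : ModuleCat.{w} A) [Module.Free A X] :
    Projective X :=
  ModuleCat.projective_of_free (Module.Free.chooseBasis A X)

namespace HasProjectiveResolution

theorem of_free (N : Type v) [AddCommGroup N] [Module A N] [Small.{w} N] [Module.Free A N] :
    HasProjectiveResolution.{w} A N 0 := by
  have : Module.Free A (Shrink.{w} N) := Module.Free.of_equiv (Shrink.linearEquiv A N).symm
  refine ⟨fun i => Nat.casesOn i (ModuleCat.of A (Shrink.{w} N)) fun _ => ModuleCat.of A PUnit,
    fun _ => 0, (Shrink.linearEquiv A N).toLinearMap, fun i => ?_, fun i hi => ?_,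
    (Shrink.linearEquiv A N).surjective, ?_, fun i => Subsingleton.elim _ _⟩
  · cases i <;> exact ModuleCat.projective_of_module_free _
  · cases i
    · omega
    · exact inferInstanceAs (Subsingleton PUnit)
  · simp

theorem splice [Small.{w} A] {ι : Type*} [Small.{w} ι] {N : Type v} [AddCommGroup N]
    [Module A N] (φ : (ι →₀ A) →ₗ[A] N) (hφ : Function.Surjective φ) {q : ℕ}
    (h : HasProjectiveResolution.{w} A (LinearMap.ker φ) q) :
    HasProjectiveResolution.{w} A N (q + 1) := by
  obtain ⟨P, d, ε, hproj, hsub, hε, hker₀, hker⟩ := h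
  let e := (Shrink.linearEquiv A (ι →₀ A)).symm
  have : Module.Free A (Shrink.{w} (ι →₀ A)) := Module.Free.of_equiv e
  refine ⟨fun i => Nat.casesOn i (ModuleCat.of A (Shrink.{w} (ι →₀ A))) P,
    fun i => Nat.casesOn i (ModuleCat.ofHom (e.toLinearMap ∘ₗ (LinearMap.ker φ).subtype ∘ₗ ε)) d,
    φ ∘ₗ e.symm.toLinearMap, fun i => ?_, fun i hi => ?_, hφ.comp e.symm.surjective, ?_,
    fun i => ?_⟩
  · cases i
    · exact ModuleCat.projective_of_module_free _
    · exact hproj _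
  · cases i
    · omega
    · exact hsub _ (by omega)
  · change LinearMap.ker (φ ∘ₗ e.symm.toLinearMap) =
      LinearMap.range (e.toLinearMap ∘ₗ (LinearMap.ker φ).subtype ∘ₗ ε)
    rw [LinearMap.ker_comp, LinearMap.range_comp, LinearMap.range_comp,
      LinearMap.range_eq_top.2 hε, Submodule.map_top, Submodule.range_subtype,
      Submodule.map_equiv_eq_comap_symm]
  · cases i
    · change LinearMap.ker (e.toLinearMap ∘ₗ (LinearMap.ker φ).subtype ∘ₗ ε) =
        LinearMap.range (d 0).hom
      rw [LinearMap.ker_comp_of_ker_eq_bot _ e.ker, LinearMap.ker_comp, Submodule.ker_subtype,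
        Submodule.comap_bot, hker₀]
    · exact hker _

end HasProjectiveResolution

end Resolution

theorem algebraMap_smul_left_injective {K A M : Type*} [Field K] [Ring A] [Algebra K A]
    [AddCommGroup M] [Module A M] {m : M} (hm : m ≠ 0) :
    Function.Injective fun c : K => algebraMap K A c • m := by
  intro c c' h
  by_contra hne
  have hsub : algebraMap K A (c - c') • m = 0 := by
    simp only [map_sub, sub_smul]
    exact sub_eq_zero.2 h
  apply hm
  rw [← one_smul A m, ← map_one (algebraMap K A), ← inv_mul_cancel₀ (sub_ne_zero.2 hne), map_mul,
    mul_smul, hsub, smul_zero]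

namespace SolvAlg

variable {K : Type*} [Field K] {A : Type u} [Ring A] [Algebra K A] {n : ℕ}

section Monomials

variable {S : SolvAlg K A n}

theorem LEord.add_lt_of_ne {α β γ δ : Fin n → ℕ} (h₁ : S.LEord α β) (h₂ : S.LEord γ δ)
    (hne : (α, γ) ≠ (β, δ)) : S.ord.lt (α + γ) (β + δ) := by
  rcases h₁ with rfl | h₁ <;> rcases h₂ with rfl | h₂
  · exact absurd rfl hne
  · exact S.ord.add_left α h₂
  · exact S.ord.add_right γ h₁
  · exact _root_.trans (S.ord.add_right γ h₁) (S.ord.add_left β h₂)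

theorem LEord.add {α β γ δ : Fin n → ℕ} (h₁ : S.LEord α β) (h₂ : S.LEord γ δ) :
    S.LEord (α + γ) (β + δ) := by
  by_cases hne : (α, γ) = (β, δ)
  · obtain ⟨rfl, rfl⟩ := Prod.mk.inj hne
    exact Or.inl rfl
  · exact Or.inr (h₁.add_lt_of_ne h₂ hne)

theorem LEord.trans {α β γ : Fin n → ℕ} (h₁ : S.LEord α β) (h₂ : S.LEord β γ) : S.LEord α γ := by
  rcases h₁ with rfl | h₁
  · exact h₂
  · rcases h₂ with rfl | h₂
    · exact Or.inr h₁
    · exact Or.inr (_root_.trans h₁ h₂)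

theorem LEord.not_lt {α β : Fin n → ℕ} (h : S.LEord α β) : ¬ S.ord.lt β α := by
  rcases h with rfl | h
  · exact irrefl α
  · exact asymm h

theorem IsLM.repr_ne_zero {f : A} {α : Fin n → ℕ} (h : S.IsLM f α) : S.basis.repr f α ≠ 0 :=
  Finsupp.mem_support_iff.1 h.1

theorem IsLM.leord {f : A} {α β : Fin n → ℕ} (h : S.IsLM f α) (hβ : S.basis.repr f β ≠ 0) :
    S.LEord β α := by
  by_cases hne : β = α
  · exact Or.inl hne
  · exact Or.inr (h.2 β (Finsupp.mem_support_iff.2 hβ) hne)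

variable (S)

theorem exists_isLM {f : A} (hf : f ≠ 0) : ∃ α, S.IsLM f α := by
  obtain ⟨α, hα, hmax⟩ := Finset.exists_rel_max S.ord.lt
    (Finsupp.support_nonempty_iff.2 (S.basis.repr.map_ne_zero_iff.2 hf))
  exact ⟨α, hα, hmax⟩

theorem isLM_basis (α : Fin n → ℕ) : S.IsLM (S.basis α) α :=
  ⟨by simp, fun β hβ hne => absurd (by simpa using hβ) hne⟩

theorem basis_zero : S.basis 0 = 1 := by
  simp [S.basis_eq, SolvMono]

theorem leord_of_repr_basis_mul_ne_zero {θ μ ν : Fin n → ℕ}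
    (h : S.basis.repr (S.basis θ * S.basis μ) ν ≠ 0) : S.LEord ν (θ + μ) := by
  by_cases hν : ν = θ + μ
  · exact Or.inl hν
  · exact Or.inr (S.s2_lower θ μ ν (Finsupp.mem_support_iff.2 h) hν)

theorem repr_mul_apply (x y : A) (ν : Fin n → ℕ) :
    S.basis.repr (x * y) ν =
      ∑ θ ∈ (S.basis.repr x).support, ∑ μ ∈ (S.basis.repr y).support,
        S.basis.repr x θ * S.basis.repr y μ * S.basis.repr (S.basis θ * S.basis μ) ν := by
  conv_lhs => rw [← S.basis.linearCombination_repr x, ← S.basis.linearCombination_repr y]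
  simp only [Finsupp.linearCombination_apply, Finsupp.sum, Finset.sum_mul, Finset.mul_sum,
    map_sum, Finset.sum_apply', smul_mul_smul, map_smul, Finsupp.smul_apply, smul_eq_mul]
  exact Finset.sum_comm

variable {S}

theorem IsLM.mul {x y : A} {α β : Fin n → ℕ} (hx : S.IsLM x α) (hy : S.IsLM y β) :
    S.IsLM (x * y) (α + β) := by
  have hlower : ∀ θ ∈ (S.basis.repr x).support, ∀ μ ∈ (S.basis.repr y).support,
      (θ, μ) ≠ (α, β) → S.basis.repr (S.basis θ * S.basis μ) (α + β) = 0 := fun θ hθ μ hμ hne =>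
    by_contra fun h => (S.leord_of_repr_basis_mul_ne_zero h).not_lt
      ((hx.leord (Finsupp.mem_support_iff.1 hθ)).add_lt_of_ne
        (hy.leord (Finsupp.mem_support_iff.1 hμ)) hne)
  refine ⟨Finsupp.mem_support_iff.2 ?_, fun ν hν hne => ?_⟩
  · rw [repr_mul_apply, Finset.sum_eq_single_of_mem α hx.1, Finset.sum_eq_single_of_mem β hy.1]
    · exact mul_ne_zero (mul_ne_zero hx.repr_ne_zero hy.repr_ne_zero) (S.s2_lc α β)
    · intro μ hμ hne
      rw [hlower α hx.1 μ hμ (by simp [hne]), mul_zero]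
    · intro θ hθ hne
      exact Finset.sum_eq_zero fun μ hμ => by rw [hlower θ hθ μ hμ (by simp [hne]), mul_zero]
  · rw [Finsupp.mem_support_iff, repr_mul_apply] at hν
    obtain ⟨θ, hθ, hν⟩ := Finset.exists_ne_zero_of_sum_ne_zero hν
    obtain ⟨μ, hμ, hν⟩ := Finset.exists_ne_zero_of_sum_ne_zero hν
    have hθμ : S.LEord (θ + μ) (α + β) :=
      (hx.leord (Finsupp.mem_support_iff.1 hθ)).add (hy.leord (Finsupp.mem_support_iff.1 hμ))
    exact ((S.leord_of_repr_basis_mul_ne_zero (right_ne_zero_of_mul hν)).trans hθμ).resolve_left hne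

end Monomials

section Terms

variable (S : SolvAlg K A n)
variable {E : Type*}

def termCoeff (p : (Fin n → ℕ) × E) (ξ : E →₀ A) : K := S.basis.repr (ξ p.2) p.1

@[simp]
theorem termCoeff_zero (p : (Fin n → ℕ) × E) : S.termCoeff p 0 = 0 := by
  simp [termCoeff]

@[simp]
theorem termCoeff_add (p : (Fin n → ℕ) × E) (ξ ζ : E →₀ A) :
    S.termCoeff p (ξ + ζ) = S.termCoeff p ξ + S.termCoeff p ζ := by
  simp [termCoeff]

@[simp]
theorem termCoeff_sub (p : (Fin n → ℕ) × E) (ξ ζ : E →₀ A) :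
    S.termCoeff p (ξ - ζ) = S.termCoeff p ξ - S.termCoeff p ζ := by
  simp [termCoeff]

@[simp]
theorem termCoeff_smul (p : (Fin n → ℕ) × E) (c : K) (ξ : E →₀ A) :
    S.termCoeff p (c • ξ) = c * S.termCoeff p ξ := by
  simp [termCoeff]

variable {S} in
theorem eq_of_termCoeff_single_basis_ne_zero {q : (Fin n → ℕ) × E} {e : E} {α : Fin n → ℕ}
    (h : S.termCoeff q (Finsupp.single e (S.basis α)) ≠ 0) : q = (α, e) := by
  classical
  obtain ⟨β, f⟩ := q
  obtain rfl : e = f := by_contra fun hef => h (by simp [termCoeff, hef])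
  obtain rfl : α = β := by_contra fun hαβ => h (by simp [termCoeff, hαβ])
  rfl

def IsLeadingTerm (T : TermOrder S.ord E) (ξ : E →₀ A) (p : (Fin n → ℕ) × E) : Prop :=
  S.termCoeff p ξ ≠ 0 ∧ ∀ q, S.termCoeff q ξ ≠ 0 → q ≠ p → T.lt q p

variable {S} {T : TermOrder S.ord E}

theorem eq_zero_of_termCoeff {ξ : E →₀ A} (h : ∀ p, S.termCoeff p ξ = 0) : ξ = 0 := by
  ext e
  exact S.basis.repr.map_eq_zero_iff.1 (Finsupp.ext fun α => h (α, e))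

variable (S T) in
theorem exists_isLeadingTerm {ξ : E →₀ A} (hξ : ξ ≠ 0) : ∃ p, S.IsLeadingTerm T ξ p := by
  classical
  let terms := ((ξ.support.biUnion fun e => (S.basis.repr (ξ e)).support) ×ˢ ξ.support).filter
    fun p => S.termCoeff p ξ ≠ 0
  have mem_terms {p} (hp : S.termCoeff p ξ ≠ 0) : p ∈ terms := by
    have he : ξ p.2 ≠ 0 := fun h => hp (by simp [termCoeff, h])
    simp only [terms, Finset.mem_filter, Finset.mem_product, Finset.mem_biUnion]
    exact ⟨⟨⟨p.2, by simpa using he, by simpa [termCoeff] using hp⟩, by simpa using he⟩, hp⟩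
  have hne : terms.Nonempty := by
    by_contra h
    exact hξ (eq_zero_of_termCoeff fun p => by_contra fun hp => h ⟨p, mem_terms hp⟩)
  obtain ⟨p, hp, hmax⟩ := Finset.exists_rel_max T.lt hne
  exact ⟨p, (Finset.mem_filter.1 hp).2, fun q hq hne => hmax q (mem_terms hq) hne⟩

theorem IsLeadingTerm.ne_zero {ξ : E →₀ A} {p} (h : S.IsLeadingTerm T ξ p) : ξ ≠ 0 := by
  rintro rfl
  exact h.1 (termCoeff_zero S p)

theorem IsLeadingTerm.le {ξ : E →₀ A} {p q} (h : S.IsLeadingTerm T ξ p)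
    (hq : S.termCoeff q ξ ≠ 0) : T.le q p := by
  by_cases hqp : q = p
  · exact Or.inl hqp
  · exact Or.inr (h.2 q hq hqp)

theorem IsLeadingTerm.unique {ξ : E →₀ A} {p q} (hp : S.IsLeadingTerm T ξ p)
    (hq : S.IsLeadingTerm T ξ q) : p = q := by
  by_contra hne
  exact asymm (hp.2 q hq.1 (Ne.symm hne)) (hq.2 p hp.1 hne)

theorem IsLeadingTerm.isLM {ξ : E →₀ A} {p} (h : S.IsLeadingTerm T ξ p) :
    S.IsLM (ξ p.2) p.1 := by
  refine ⟨Finsupp.mem_support_iff.2 h.1, fun β hβ hne => ?_⟩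
  have hlt := h.2 (β, p.2) (Finsupp.mem_support_iff.1 hβ) fun h => hne (congrArg Prod.fst h)
  rcases trichotomous_of S.ord.lt β p.1 with hβp | rfl | hpβ
  · exact hβp
  · exact absurd rfl hne
  · exact absurd (T.lt_of_lt p.2 hpβ) (asymm hlt)

theorem IsLeadingTerm.smul {x : A} {α : Fin n → ℕ} {ξ : E →₀ A} {p} (hx : S.IsLM x α)
    (hp : S.IsLeadingTerm T ξ p) : S.IsLeadingTerm T (x • ξ) (α + p.1, p.2) := by
  refine ⟨(hx.mul hp.isLM).repr_ne_zero, ?_⟩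
  rintro ⟨ν, e⟩ hq hne
  have hξe : ξ e ≠ 0 := fun h => hq (by simp [termCoeff, h])
  obtain ⟨μ, hμ⟩ := S.exists_isLM hξe
  have hν : S.LEord ν (α + μ) := (hx.mul hμ).leord hq
  rcases hp.le (q := (μ, e)) hμ.repr_ne_zero with hμp | hμp
  · obtain ⟨rfl, rfl⟩ := Prod.mk.inj hμp
    exact T.lt_of_lt _ (hν.resolve_left fun h => hne (by rw [h]))
  · rcases hν with rfl | hν
    · exact T.add_left α hμp
    · exact _root_.trans (T.lt_of_lt e hν) (T.add_left α hμp)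

end Terms

section Division

variable {S : SolvAlg K A n}
variable {E : Type*} {T : TermOrder S.ord E}

theorem IsLeadingTerm.lt_of_termCoeff_sub_smul_ne_zero {ξ ζ : E →₀ A} {p q}
    (hξ : S.IsLeadingTerm T ξ p) (hζ : S.IsLeadingTerm T ζ p)
    (hq : S.termCoeff q (ξ - (S.termCoeff p ξ / S.termCoeff p ζ) • ζ) ≠ 0) : T.lt q p := by
  rw [termCoeff_sub, termCoeff_smul] at hq
  have hqp : q ≠ p := by
    rintro rfl
    exact hq (by rw [div_mul_cancel₀ _ hζ.1, sub_self])
  by_cases hqξ : S.termCoeff q ξ = 0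
  · rw [hqξ, zero_sub, neg_ne_zero] at hq
    exact hζ.2 q (right_ne_zero_of_mul hq) hqp
  · exact hξ.2 q hqξ hqp

variable (S T) in
/-- Left divisibility of monomials is the componentwise order on exponents, by `IsLM.mul`. -/
structure IsGBFamily (N : Submodule A (E →₀ A)) {ι : Type*} (g : ι → E →₀ A)
    (lm : ι → (Fin n → ℕ) × E) : Prop where
  mem : ∀ i, g i ∈ N
  isLeadingTerm : ∀ i, S.IsLeadingTerm T (g i) (lm i)
  exists_dvd : ∀ f ∈ N, ∀ p, S.IsLeadingTerm T f p → ∃ i, (lm i).2 = p.2 ∧ (lm i).1 ≤ p.1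

namespace IsGBFamily

variable {N : Submodule A (E →₀ A)} {ι : Type*} {g : ι → E →₀ A} {lm : ι → (Fin n → ℕ) × E}

theorem isLeadingTerm_smul_basis (hG : S.IsGBFamily T N g lm) (i : ι) (γ : Fin n → ℕ) :
    S.IsLeadingTerm T (S.basis γ • g i) (TermOrder.weight lm (γ, i)) :=
  (hG.isLeadingTerm i).smul (S.isLM_basis γ)

theorem exists_linearCombination_eq (hG : S.IsGBFamily T N g lm) :
    ∀ p, ∀ f ∈ N, S.IsLeadingTerm T f p → ∃ σ : ι →₀ A, Finsupp.linearCombination A g σ = f ∧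
      ∀ q, S.termCoeff q σ ≠ 0 → T.le (TermOrder.weight lm q) p := by
  intro p
  induction p using IsWellFounded.induction T.lt with | _ p IH => ?_
  intro f hf hp
  obtain ⟨i, hpos, hdvd⟩ := hG.exists_dvd f hf p hp
  set γ := p.1 - (lm i).1
  have hγ : TermOrder.weight lm (γ, i) = p := by
    simp only [TermOrder.weight, γ, hpos, tsub_add_cancel_of_le hdvd]
  have hζ := hG.isLeadingTerm_smul_basis i γ
  rw [hγ] at hζ
  set c := S.termCoeff p f / S.termCoeff p (S.basis γ • g i)
  set σ₀ := c • Finsupp.single i (S.basis γ)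
  have hσ₀ : Finsupp.linearCombination A g σ₀ = c • (S.basis γ • g i) := by
    simp [σ₀]
  have hσ₀w : ∀ q, S.termCoeff q σ₀ ≠ 0 → T.le (TermOrder.weight lm q) p := fun q hq => by
    rw [termCoeff_smul] at hq
    exact Or.inl (by rw [eq_of_termCoeff_single_basis_ne_zero (right_ne_zero_of_mul hq), hγ])
  have hrem := fun q => hp.lt_of_termCoeff_sub_smul_ne_zero hζ (q := q)
  by_cases hf' : f - c • (S.basis γ • g i) = 0
  · exact ⟨σ₀, by rw [hσ₀]; exact (sub_eq_zero.1 hf').symm, hσ₀w⟩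
  obtain ⟨p', hp'⟩ := S.exists_isLeadingTerm T hf'
  have hf'N : f - c • (S.basis γ • g i) ∈ N :=
    N.sub_mem hf (N.smul_of_tower_mem c (N.smul_mem _ (hG.mem i)))
  obtain ⟨σ', hσ', hσ'w⟩ := IH p' (hrem p' hp'.1) _ hf'N hp'
  refine ⟨σ' + σ₀, by rw [map_add, hσ', hσ₀, sub_add_cancel], fun q hq => ?_⟩
  by_cases hq' : S.termCoeff q σ' = 0
  · rw [termCoeff_add, hq', zero_add] at hq
    exact hσ₀w q hq
  · exact Or.inr ((hσ'w q hq').trans_lt (hrem p' hp'.1))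

theorem exists_linearCombination_eq_of_lt (hG : S.IsGBFamily T N g lm) {f : E →₀ A}
    (hf : f ∈ N) {b} (hb : ∀ q, S.termCoeff q f ≠ 0 → T.lt q b) :
    ∃ σ : ι →₀ A, Finsupp.linearCombination A g σ = f ∧
      ∀ q, S.termCoeff q σ ≠ 0 → T.lt (TermOrder.weight lm q) b := by
  by_cases hf0 : f = 0
  · exact ⟨0, by simp [hf0], fun q hq => absurd (termCoeff_zero S q) hq⟩
  obtain ⟨p, hp⟩ := S.exists_isLeadingTerm T hf0
  obtain ⟨σ, hσ, hσw⟩ := hG.exists_linearCombination_eq p f hf hp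
  exact ⟨σ, hσ, fun q hq => (hσw q hq).trans_lt (hb p hp.1)⟩

theorem range_linearCombination (hG : S.IsGBFamily T N g lm) :
    LinearMap.range (Finsupp.linearCombination A g) = N := by
  refine le_antisymm ?_ fun f hf => ?_
  · rw [Finsupp.range_linearCombination, Submodule.span_le]
    rintro _ ⟨i, rfl⟩
    exact hG.mem i
  · by_cases hf0 : f = 0
    · exact hf0 ▸ Submodule.zero_mem _
    obtain ⟨p, hp⟩ := S.exists_isLeadingTerm T hf0
    obtain ⟨σ, hσ, -⟩ := hG.exists_linearCombination_eq p f hf hp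
    exact ⟨σ, hσ⟩

end IsGBFamily

end Division

section Syzygies

variable {S : SolvAlg K A n}
variable {E : Type*} {T : TermOrder S.ord E}
variable {ι : Type*} {g : ι → E →₀ A} {lm : ι → (Fin n → ℕ) × E} {r : ι → ι → Prop}
  [IsWellOrder ι r]

theorem termCoeff_linearCombination (p : (Fin n → ℕ) × E) (τ : ι →₀ A) :
    S.termCoeff p (Finsupp.linearCombination A g τ) =
      ∑ i ∈ τ.support, S.termCoeff p (τ i • g i) := by
  simp [termCoeff, Finsupp.linearCombination_apply, Finsupp.sum, Finsupp.finsetSum_apply]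

/-- The top term of `τ_i g_i` must cancel in `∑ τ_j g_j = 0` against a term of the same weight
from some `τ_j g_j`, and then `j` comes before `i` in `r`. -/
theorem exists_rel_of_isLeadingTerm_syzygy (hlm : ∀ i, S.IsLeadingTerm T (g i) (lm i))
    {τ : ι →₀ A} (hτ : Finsupp.linearCombination A g τ = 0) {p : (Fin n → ℕ) × ι}
    (hp : S.IsLeadingTerm (T.schreyer lm r) τ p) :
    ∃ j, r j p.2 ∧ (lm j).2 = (lm p.2).2 ∧ (lm j).1 ≤ p.1 + (lm p.2).1 := by
  classical
  set w := TermOrder.weight lm p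
  have hp2 : p.2 ∈ τ.support := Finsupp.mem_support_iff.2 fun h => hp.1 (by simp [termCoeff, h])
  have htop : S.termCoeff w (τ p.2 • g p.2) ≠ 0 := ((hlm p.2).smul hp.isLM).1
  obtain ⟨j, hj, hjp, hjw⟩ : ∃ j ∈ τ.support, j ≠ p.2 ∧ S.termCoeff w (τ j • g j) ≠ 0 := by
    by_contra! h
    have hsum := termCoeff_linearCombination (S := S) (g := g) w τ
    rw [hτ, termCoeff_zero, Finset.sum_eq_single_of_mem p.2 hp2 h] at hsum
    exact htop hsum.symm
  obtain ⟨θ, hθ⟩ := S.exists_isLM (Finsupp.mem_support_iff.1 hj)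
  have hwj : T.le w (TermOrder.weight lm (θ, j)) := ((hlm j).smul hθ).le hjw
  rcases (TermOrder.schreyer_lt_iff T lm r).1
    (hp.2 (θ, j) hθ.repr_ne_zero fun h => hjp (congrArg Prod.snd h)) with hlt | ⟨heq, hr⟩
  · exact absurd (hwj.trans_lt hlt) (irrefl w)
  · simp only [TermOrder.weight, Prod.mk.injEq] at heq
    exact ⟨j, hr, heq.2, heq.1 ▸ le_add_self⟩

variable {N : Submodule A (E →₀ A)}

/-- The syzygy given by the S-polynomial of `g j` and `g i`, reduced to zero by division. -/
theorem IsGBFamily.exists_syzygy_isLeadingTerm (hG : S.IsGBFamily T N g lm) {i j : ι}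
    (hr : r j i) (hpos : (lm j).2 = (lm i).2) :
    ∃ σ : ι →₀ A, Finsupp.linearCombination A g σ = 0 ∧
      S.IsLeadingTerm (T.schreyer lm r) σ ((lm j).1 ⊔ (lm i).1 - (lm i).1, i) := by
  classical
  set J := (lm j).1 ⊔ (lm i).1
  set u := J - (lm i).1
  set u' := J - (lm j).1
  have hu : u + (lm i).1 = J := tsub_add_cancel_of_le le_sup_right
  have hu' : u' + (lm j).1 = J := tsub_add_cancel_of_le le_sup_left
  have hwu : TermOrder.weight lm (u, i) = (J, (lm i).2) := by
    simp only [TermOrder.weight, hu]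
  have hwu' : TermOrder.weight lm (u', j) = (J, (lm i).2) := by
    simp only [TermOrder.weight, hu', hpos]
  have hζ := hG.isLeadingTerm_smul_basis i u
  have hζ' := hG.isLeadingTerm_smul_basis j u'
  rw [hwu] at hζ
  rw [hwu'] at hζ'
  set c := S.termCoeff (J, (lm i).2) (S.basis u • g i) /
    S.termCoeff (J, (lm i).2) (S.basis u' • g j)
  have hspoly : S.basis u • g i - c • (S.basis u' • g j) ∈ N :=
    N.sub_mem (N.smul_mem _ (hG.mem i)) (N.smul_of_tower_mem c (N.smul_mem _ (hG.mem j)))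
  obtain ⟨σ₃, hσ₃, hσ₃w⟩ := hG.exists_linearCombination_eq_of_lt hspoly
    fun q => hζ.lt_of_termCoeff_sub_smul_ne_zero hζ'
  have hji : j ≠ i := fun h => irrefl i (h ▸ hr)
  have hσ₃u : S.termCoeff (u, i) σ₃ = 0 :=
    by_contra fun h => irrefl _ (hwu ▸ hσ₃w (u, i) h)
  refine ⟨Finsupp.single i (S.basis u) - c • Finsupp.single j (S.basis u') - σ₃,
    by simp [hσ₃], ?_, fun q hq hqu => ?_⟩
  · have hj : S.termCoeff (u, i) (Finsupp.single j (S.basis u')) = 0 :=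
      by_contra fun h => hji (congrArg Prod.snd (eq_of_termCoeff_single_basis_ne_zero h)).symm
    rw [termCoeff_sub, termCoeff_sub, termCoeff_smul, hσ₃u, hj]
    simp [termCoeff]
  · rw [TermOrder.schreyer_lt_iff, hwu]
    simp only [termCoeff_sub, termCoeff_smul] at hq
    by_cases hq₃ : S.termCoeff q σ₃ = 0
    · rw [hq₃, sub_zero] at hq
      by_cases hqi : S.termCoeff q (Finsupp.single i (S.basis u)) = 0
      · rw [hqi, zero_sub, neg_ne_zero] at hq
        obtain rfl := eq_of_termCoeff_single_basis_ne_zero (right_ne_zero_of_mul hq)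
        exact Or.inr ⟨hwu', hr⟩
      · exact absurd (eq_of_termCoeff_single_basis_ne_zero hqi) hqu
    · exact Or.inl (hσ₃w q hq₃)

end Syzygies

section VanishingBelow

variable (S : SolvAlg K A n)
variable {E : Type*}

/-- `N` has a Gröbner basis whose leading exponents involve none of `a_1, …, a_k`. -/
def HasGBVanishingBelow (T : TermOrder S.ord E) (k : ℕ) (N : Submodule A (E →₀ A)) : Prop :=
  ∀ f ∈ N, ∀ p, S.IsLeadingTerm T f p → ∃ f' ∈ N, ∃ p', S.IsLeadingTerm T f' p' ∧
    p'.2 = p.2 ∧ p'.1 ≤ p.1 ∧ VanishesBelow k p'.1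

theorem hasGBVanishingBelow_zero (T : TermOrder S.ord E) (N : Submodule A (E →₀ A)) :
    S.HasGBVanishingBelow T 0 N :=
  fun f hf p hp => ⟨f, hf, p, hp, rfl, le_rfl, fun _ h => absurd h (Nat.not_lt_zero _)⟩

variable {S} {T : TermOrder S.ord E} {k : ℕ} {N : Submodule A (E →₀ A)}

theorem HasGBVanishingBelow.exists_isGBFamily (h : S.HasGBVanishingBelow T k N) :
    ∃ (G : Set (E →₀ A)) (lm : G → (Fin n → ℕ) × E),
      S.IsGBFamily T N ((↑) : G → E →₀ A) lm ∧ ∀ f, VanishesBelow k (lm f).1 := by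
  let G : Set (E →₀ A) := {f | f ∈ N ∧ ∃ p, S.IsLeadingTerm T f p ∧ VanishesBelow k p.1}
  choose lm hlm hvan using fun f : G => f.2.2
  refine ⟨G, lm, ⟨fun f => f.2.1, hlm, fun f hf p hp => ?_⟩, hvan⟩
  obtain ⟨f', hf', p', hp', hpos, hle, hvan'⟩ := h f hf p hp
  have hlm' := (hlm ⟨f', hf', p', hp', hvan'⟩).unique hp'
  exact ⟨⟨f', hf', p', hp', hvan'⟩, by rw [hlm', hpos], by rw [hlm']; exact hle⟩

/-- Schreyer's theorem, refined: ordering the Gröbner basis by the exponent of `a_{k+1}` in the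
leading terms, the syzygy module acquires a Gröbner basis avoiding `a_1, …, a_{k+1}`. -/
theorem HasGBVanishingBelow.exists_syzygies (h : S.HasGBVanishingBelow T k N) (hk : k < n) :
    ∃ (G : Set (E →₀ A)) (T' : TermOrder S.ord G),
      LinearMap.range (Finsupp.linearCombination A ((↑) : G → E →₀ A)) = N ∧
      S.HasGBVanishingBelow T' (k + 1)
        (LinearMap.ker (Finsupp.linearCombination A ((↑) : G → E →₀ A))) := by
  obtain ⟨G, lm, hG, hvan⟩ := h.exists_isGBFamily
  let r : G → G → Prop := InvImage (Prod.Lex (· < ·) WellOrderingRel) fun f => ((lm f).1 ⟨k, hk⟩, f)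
  have : IsWellOrder G r :=
    (RelEmbedding.preimage ⟨_, fun _ _ h => (Prod.mk.inj h).2⟩ _).isWellOrder
  refine ⟨G, T.schreyer lm r, hG.range_linearCombination, fun τ hτ p hp => ?_⟩
  obtain ⟨j, hr, hpos, hdvd⟩ :=
    exists_rel_of_isLeadingTerm_syzygy hG.isLeadingTerm (LinearMap.mem_ker.1 hτ) hp
  obtain ⟨σ, hσ, hσp⟩ := hG.exists_syzygy_isLeadingTerm hr hpos
  refine ⟨σ, LinearMap.mem_ker.2 hσ, _, hσp, rfl, fun x => ?_, (hvan j).sup_tsub hk (hvan p.2) ?_⟩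
  · have := hdvd x
    simp only [Pi.add_apply] at this
    simp only [Pi.sub_apply, Pi.sup_apply]
    omega
  · rcases Prod.lex_def.1 hr with h | ⟨h, -⟩ <;> exact h.le

/-- In one variable the leading exponents are totally ordered under divisibility, so a
Gröbner basis with one element per position has no syzygies at all. -/
theorem HasGBVanishingBelow.free (h : S.HasGBVanishingBelow T k N) (hk : k + 1 = n) :
    Module.Free A N := by
  classical
  let v : Fin n := ⟨k, by omega⟩
  let degs (e : E) : Set ℕ := {a | ∃ f ∈ N, S.IsLeadingTerm T f (Pi.single v a, e)}
  let ι := {e : E // (degs e).Nonempty}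
  choose g hgN hg using fun e : ι => Nat.sInf_mem e.2
  let lm (e : ι) : (Fin n → ℕ) × E := (Pi.single v (sInf (degs e.1)), e.1)
  have hG : S.IsGBFamily T N g lm := by
    refine ⟨hgN, hg, fun f hf p hp => ?_⟩
    obtain ⟨f', hf', p', hp', hpos, hle, hvan⟩ := h f hf p hp
    have hp'v := hvan.eq_single v.isLt hk.ge
    have hdeg : p'.1 v ∈ degs p.2 := ⟨f', hf', by rw [← hp'v, ← hpos]; exact hp'⟩
    refine ⟨⟨p.2, _, hdeg⟩, rfl, fun x => ?_⟩
    by_cases hx : x = v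
    · subst hx
      simpa [lm] using (Nat.sInf_le hdeg).trans (hle v)
    · simp [lm, Pi.single_eq_of_ne hx]
  have hli : LinearIndependent A g := by
    refine linearIndependent_iff.2 fun τ hτ => by_contra fun hτ0 => ?_
    obtain ⟨p, hp⟩ := S.exists_isLeadingTerm (T.schreyer lm WellOrderingRel) hτ0
    obtain ⟨j, hr, hpos, -⟩ := exists_rel_of_isLeadingTerm_syzygy hG.isLeadingTerm hτ hp
    exact irrefl _ ((Subtype.ext hpos : j = p.2) ▸ hr)
  have hspan : Submodule.span A (Set.range g) = N := by
    rw [← Finsupp.range_linearCombination, hG.range_linearCombination]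
  exact Module.Free.of_basis ((Module.Basis.span hli).map (LinearEquiv.ofEq _ _ hspan))

end VanishingBelow

section Resolution

theorem hasProjectiveResolution_of_hasGBVanishingBelow (S : SolvAlg K A n) [Small.{w} A]
    (m k : ℕ) (hk : k + m + 1 = n) {E : Type (max u w)} [Small.{w} E] {T : TermOrder S.ord E}
    {N : Submodule A (E →₀ A)} (h : S.HasGBVanishingBelow T k N) :
    HasProjectiveResolution.{w} A N m := by
  induction m generalizing k E T N with
  | zero =>
    have := h.free hk
    exact HasProjectiveResolution.of_free N
  | succ m IH =>
    obtain ⟨G, T', hrange, hsyz⟩ := h.exists_syzygies (by omega)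
    let φ := (Finsupp.linearCombination A ((↑) : G → E →₀ A)).codRestrict N
      fun σ => hrange ▸ LinearMap.mem_range_self _ σ
    have hφ : Function.Surjective φ := by
      rintro ⟨f, hf⟩
      obtain ⟨σ, hσ⟩ := hrange ▸ hf
      exact ⟨σ, Subtype.ext hσ⟩
    have hker : LinearMap.ker φ = LinearMap.ker (Finsupp.linearCombination A ((↑) : G → E →₀ A)) :=
      LinearMap.ker_codRestrict _ _ _
    exact HasProjectiveResolution.splice φ hφ (hker ▸ IH (k + 1) (by omega) hsyz)

theorem algebraMap_surjective_of_zero (S : SolvAlg K A 0) : Function.Surjective (algebraMap K A) :=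
  fun a => ⟨S.basis.repr a 0, by
    rw [Algebra.algebraMap_eq_smul_one, ← S.basis_zero]
    conv_rhs => rw [← S.basis.linearCombination_repr a, Finsupp.unique_single (S.basis.repr a)]
    rw [Finsupp.linearCombination_single]
    congr!⟩

theorem isUnit_or_eq_zero_of_zero (S : SolvAlg K A 0) (a : A) : IsUnit a ∨ a = 0 := by
  obtain ⟨c, rfl⟩ := S.algebraMap_surjective_of_zero a
  rcases eq_or_ne c 0 with rfl | hc
  · exact Or.inr (map_zero _)
  · exact Or.inl ((IsUnit.mk0 c hc).map (algebraMap K A))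

theorem free_of_zero (S : SolvAlg K A 0) (M : Type*) [AddCommGroup M] [Module A M] :
    Module.Free A M := by
  have : Nontrivial A := ⟨⟨1, 0, by rw [← S.basis_zero]; exact S.basis.ne_zero 0⟩⟩
  let := DivisionRing.ofIsUnitOrEqZero S.isUnit_or_eq_zero_of_zero
  exact Module.Free.of_divisionRing A M

theorem exists_hasProjectiveResolution (S : SolvAlg K A n) (M : Type v) [AddCommGroup M]
    [Module A M] : ∃ q ≤ n, HasProjectiveResolution.{v} A M q := by
  rcases Nat.eq_zero_or_pos n with rfl | hn
  · have := S.free_of_zero M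
    exact ⟨0, le_rfl, HasProjectiveResolution.of_free M⟩
  rcases subsingleton_or_nontrivial M with hM | hM
  · have := Module.Free.of_subsingleton A M
    exact ⟨0, Nat.zero_le n, HasProjectiveResolution.of_free M⟩
  -- a nonzero module contains a copy of `K`, so `A ≃ (ℕ^n →₀ K)` is `v`-small
  obtain ⟨m, hm⟩ := exists_ne (0 : M)
  have : Small.{v} K := small_of_injective (algebraMap_smul_left_injective (A := A) hm)
  have : Small.{v} ((Fin n → ℕ) →₀ K) := small_of_injective DFunLike.coe_injective
  have : Small.{v} A := small_of_injective S.basis.repr.injective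
  let φ := Finsupp.linearCombination A (ULift.down : ULift.{u} M → M)
  have hφ : Function.Surjective φ := fun x => ⟨Finsupp.single ⟨x⟩ 1, by simp [φ]⟩
  have hres := S.hasProjectiveResolution_of_hasGBVanishingBelow (n - 1) 0 (by omega)
    (S.hasGBVanishingBelow_zero (TermOrder.lex S.ord _) (LinearMap.ker φ))
  exact ⟨n, le_rfl, Nat.sub_add_cancel hn ▸ HasProjectiveResolution.splice φ hφ hres⟩

end Resolution

end SolvAlg

open CategoryTheory

/-- Projective dimension `≤ n` is encoded by a projective resolution
`0 → P_q → ⋯ → P_0 → M → 0` with `q ≤ n`. -/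
theorem solvAlg_global_dimension {K : Type*} [Field K] {A : Type*} [Ring A] [Algebra K A]
    {n : ℕ} (S : SolvAlg K A n) :
    ∀ M : ModuleCat A, ∃ q ≤ n, ∃ (P : ℕ → ModuleCat A)
      (d : ∀ i : ℕ, P (i + 1) ⟶ P i) (ε : P 0 ⟶ M),
      (∀ i, CategoryTheory.Projective (P i)) ∧
      (∀ i, q < i → Subsingleton (P i)) ∧
      Function.Surjective ε ∧
      LinearMap.ker ε.hom = LinearMap.range (d 0).hom ∧
      ∀ i : ℕ, LinearMap.ker (d i).hom = LinearMap.range (d (i + 1)).hom := by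
  intro M
  obtain ⟨q, hq, P, d, ε, hP, hlen, hε, hexact₀, hexact⟩ := S.exists_hasProjectiveResolution M
  exact ⟨q, hq, P, d, ModuleCat.ofHom ε, hP, hlen, hε, hexact₀, hexact⟩
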